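/- For real parameters α, λ0, λ1, λ2, λ3, define K = λ0 H − λ1 V1 − λ2 V2 − λ3 V3 on ℝ⁶, where H = ½(s1²+s2²+2s3²) + α r1 s3 − ½α² r3², V1 = s1r1+s2r2+s3r3, V2 = r1²+r2²+r3², and V3 = ½[(α r1 s1 + α r2 s2 + s1 s3)² + s3²(s2² + (α r1 + s3)²)]. Then the determinant of the Hessian matrix of K at the origin of ℝ⁶ equals −(λ1² + 2λ0λ2)(α²λ0² + λ1² + 2λ0λ2)(α²λ0² + λ1² + 4λ0λ2). In particular, the origin is a degenerate critical point of K exactly when (λ1² + 2λ0λ2)(α²λ0² + λ1² + 2λ0λ2)(α²λ0² + λ1² + 4λ0λ2) = 0. -/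

import Mathlib

noncomputable section

/-- The family of first integrals K = λ0 H − λ1 V1 − λ2 V2 − λ3 V3 of the transformed
Kirchhoff–Sokolov system, as a function on ℝ⁶ with coordinates
x 0 = s1, x 1 = s2, x 2 = s3, x 3 = r1, x 4 = r2, x 5 = r3. -/
def Ksok (α lam0 lam1 lam2 lam3 : ℝ) (x : Fin 6 → ℝ) : ℝ :=
  lam0 * ((1 / 2) * ((x 0) ^ 2 + (x 1) ^ 2 + 2 * (x 2) ^ 2)
      + α * (x 3) * (x 2) - (1 / 2) * α ^ 2 * (x 5) ^ 2)
    - lam1 * ((x 0) * (x 3) + (x 1) * (x 4) + (x 2) * (x 5))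
    - lam2 * ((x 3) ^ 2 + (x 4) ^ 2 + (x 5) ^ 2)
    - lam3 * ((1 / 2) * ((α * (x 3) * (x 0) + α * (x 4) * (x 1) + (x 0) * (x 2)) ^ 2
      + (x 2) ^ 2 * ((x 1) ^ 2 + (α * (x 3) + (x 2)) ^ 2)))

def pr (i : Fin 6) : (Fin 6 → ℝ) →L[ℝ] ℝ := ContinuousLinearMap.proj i

theorem hasFDerivAt_sq {E : Type*} [NormedAddCommGroup E] [NormedSpace ℝ E]
    {f : E → ℝ} {f' : E →L[ℝ] ℝ} {x : E} (h : HasFDerivAt f f' x) :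
    HasFDerivAt (fun y => f y ^ 2) ((2 * f x) • f') x := by
  have h2 : (fun y : E => f y ^ 2) = fun y => f y * f y := by funext y; ring
  rw [h2]
  exact (h.mul h).congr_fderiv (by ext v; simp; ring)

def G0 (α l0 l1 l2 l3 : ℝ) (x : Fin 6 → ℝ) : ℝ :=
  l0 * x 0 - l1 * x 3
    - l3 * ((α * x 3 * x 0 + α * x 4 * x 1 + x 0 * x 2) * (α * x 3 + x 2))

def G1 (α l0 l1 l2 l3 : ℝ) (x : Fin 6 → ℝ) : ℝ :=
  l0 * x 1 - l1 * x 4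
    - l3 * ((α * x 3 * x 0 + α * x 4 * x 1 + x 0 * x 2) * (α * x 4) + x 2 ^ 2 * x 1)

def G2 (α l0 l1 l2 l3 : ℝ) (x : Fin 6 → ℝ) : ℝ :=
  2 * l0 * x 2 + l0 * α * x 3 - l1 * x 5
    - l3 * ((α * x 3 * x 0 + α * x 4 * x 1 + x 0 * x 2) * x 0
        + x 2 * (x 1 ^ 2 + (α * x 3 + x 2) ^ 2) + x 2 ^ 2 * (α * x 3 + x 2))

def G3 (α l0 l1 l2 l3 : ℝ) (x : Fin 6 → ℝ) : ℝ :=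
  l0 * α * x 2 - l1 * x 0 - 2 * l2 * x 3
    - l3 * ((α * x 3 * x 0 + α * x 4 * x 1 + x 0 * x 2) * (α * x 0)
        + x 2 ^ 2 * (α * (α * x 3 + x 2)))

def G4 (α l0 l1 l2 l3 : ℝ) (x : Fin 6 → ℝ) : ℝ :=
  -(l1 * x 1) - 2 * l2 * x 4
    - l3 * ((α * x 3 * x 0 + α * x 4 * x 1 + x 0 * x 2) * (α * x 1))

def G5 (α l0 l1 l2 l3 : ℝ) (x : Fin 6 → ℝ) : ℝ :=
  -(l0 * α ^ 2 * x 5) - l1 * x 2 - 2 * l2 * x 5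

def Kgrad (α l0 l1 l2 l3 : ℝ) (x : Fin 6 → ℝ) : (Fin 6 → ℝ) →L[ℝ] ℝ :=
  G0 α l0 l1 l2 l3 x • pr 0 + G1 α l0 l1 l2 l3 x • pr 1 + G2 α l0 l1 l2 l3 x • pr 2
    + G3 α l0 l1 l2 l3 x • pr 3 + G4 α l0 l1 l2 l3 x • pr 4 + G5 α l0 l1 l2 l3 x • pr 5

theorem hasFDerivAt_Ksok (α l0 l1 l2 l3 : ℝ) (x : Fin 6 → ℝ) :
    HasFDerivAt (Ksok α l0 l1 l2 l3) (Kgrad α l0 l1 l2 l3 x) x := by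
  have h : ∀ i : Fin 6, HasFDerivAt (fun x : Fin 6 → ℝ => x i) (pr i) x :=
    fun i => hasFDerivAt_apply i x
  have hA := ((((h 3).const_mul α).mul (h 0)).add (((h 4).const_mul α).mul (h 1))).add
    ((h 0).mul (h 2))
  have hB := ((h 3).const_mul α).add (h 2)
  have hU := (((((hasFDerivAt_sq (h 0)).add (hasFDerivAt_sq (h 1))).add
      ((hasFDerivAt_sq (h 2)).const_mul 2)).const_mul (1 / 2 : ℝ)).add
      (((h 3).const_mul α).mul (h 2))).sub ((hasFDerivAt_sq (h 5)).const_mul (1 / 2 * α ^ 2))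
  have hV1 := (((h 0).mul (h 3)).add ((h 1).mul (h 4))).add ((h 2).mul (h 5))
  have hV2 := ((hasFDerivAt_sq (h 3)).add (hasFDerivAt_sq (h 4))).add (hasFDerivAt_sq (h 5))
  have hV3 := ((hasFDerivAt_sq hA).add ((hasFDerivAt_sq (h 2)).mul
      ((hasFDerivAt_sq (h 1)).add (hasFDerivAt_sq hB)))).const_mul (1 / 2 : ℝ)
  have H := (((hU.const_mul l0).sub (hV1.const_mul l1)).sub (hV2.const_mul l2)).sub
    (hV3.const_mul l3)
  exact H.congr_fderiv (by
    ext v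
    simp [Kgrad, G0, G1, G2, G3, G4, G5, pr]
    ring)

theorem hasFDerivAt_G0 (α l0 l1 l2 l3 : ℝ) :
    HasFDerivAt (G0 α l0 l1 l2 l3) (l0 • pr 0 - l1 • pr 3) (0 : Fin 6 → ℝ) := by
  have h : ∀ i : Fin 6, HasFDerivAt (fun x : Fin 6 → ℝ => x i) (pr i) (0 : Fin 6 → ℝ) :=
    fun i => hasFDerivAt_apply i 0
  have hA := ((((h 3).const_mul α).mul (h 0)).add (((h 4).const_mul α).mul (h 1))).add
    ((h 0).mul (h 2))
  have hB := ((h 3).const_mul α).add (h 2)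
  have H := (((h 0).const_mul l0).sub ((h 3).const_mul l1)).sub ((hA.mul hB).const_mul l3)
  exact H.congr_fderiv (by ext v; simp [pr]; try ring)

theorem hasFDerivAt_G1 (α l0 l1 l2 l3 : ℝ) :
    HasFDerivAt (G1 α l0 l1 l2 l3) (l0 • pr 1 - l1 • pr 4) (0 : Fin 6 → ℝ) := by
  have h : ∀ i : Fin 6, HasFDerivAt (fun x : Fin 6 → ℝ => x i) (pr i) (0 : Fin 6 → ℝ) :=
    fun i => hasFDerivAt_apply i 0
  have hA := ((((h 3).const_mul α).mul (h 0)).add (((h 4).const_mul α).mul (h 1))).add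
    ((h 0).mul (h 2))
  have H := (((h 1).const_mul l0).sub ((h 4).const_mul l1)).sub
    (((hA.mul ((h 4).const_mul α)).add ((hasFDerivAt_sq (h 2)).mul (h 1))).const_mul l3)
  exact H.congr_fderiv (by ext v; simp [pr]; try ring)

theorem hasFDerivAt_G2 (α l0 l1 l2 l3 : ℝ) :
    HasFDerivAt (G2 α l0 l1 l2 l3) ((2 * l0) • pr 2 + (l0 * α) • pr 3 - l1 • pr 5)
      (0 : Fin 6 → ℝ) := by
  have h : ∀ i : Fin 6, HasFDerivAt (fun x : Fin 6 → ℝ => x i) (pr i) (0 : Fin 6 → ℝ) :=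
    fun i => hasFDerivAt_apply i 0
  have hA := ((((h 3).const_mul α).mul (h 0)).add (((h 4).const_mul α).mul (h 1))).add
    ((h 0).mul (h 2))
  have hB := ((h 3).const_mul α).add (h 2)
  have H := ((((h 2).const_mul (2 * l0)).add ((h 3).const_mul (l0 * α))).sub
      ((h 5).const_mul l1)).sub
    ((((hA.mul (h 0)).add ((h 2).mul ((hasFDerivAt_sq (h 1)).add (hasFDerivAt_sq hB)))).add
      ((hasFDerivAt_sq (h 2)).mul hB)).const_mul l3)
  exact H.congr_fderiv (by ext v; simp [pr]; try ring)

theorem hasFDerivAt_G3 (α l0 l1 l2 l3 : ℝ) :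
    HasFDerivAt (G3 α l0 l1 l2 l3) ((l0 * α) • pr 2 - l1 • pr 0 - (2 * l2) • pr 3)
      (0 : Fin 6 → ℝ) := by
  have h : ∀ i : Fin 6, HasFDerivAt (fun x : Fin 6 → ℝ => x i) (pr i) (0 : Fin 6 → ℝ) :=
    fun i => hasFDerivAt_apply i 0
  have hA := ((((h 3).const_mul α).mul (h 0)).add (((h 4).const_mul α).mul (h 1))).add
    ((h 0).mul (h 2))
  have hB := ((h 3).const_mul α).add (h 2)
  have H := ((((h 2).const_mul (l0 * α)).sub ((h 0).const_mul l1)).sub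
      ((h 3).const_mul (2 * l2))).sub
    (((hA.mul ((h 0).const_mul α)).add
      ((hasFDerivAt_sq (h 2)).mul (hB.const_mul α))).const_mul l3)
  exact H.congr_fderiv (by ext v; simp [pr]; try ring)

theorem hasFDerivAt_G4 (α l0 l1 l2 l3 : ℝ) :
    HasFDerivAt (G4 α l0 l1 l2 l3) ((-l1) • pr 1 - (2 * l2) • pr 4) (0 : Fin 6 → ℝ) := by
  have h : ∀ i : Fin 6, HasFDerivAt (fun x : Fin 6 → ℝ => x i) (pr i) (0 : Fin 6 → ℝ) :=
    fun i => hasFDerivAt_apply i 0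
  have hA := ((((h 3).const_mul α).mul (h 0)).add (((h 4).const_mul α).mul (h 1))).add
    ((h 0).mul (h 2))
  have H := ((((h 1).const_mul l1).neg).sub ((h 4).const_mul (2 * l2))).sub
    ((hA.mul ((h 1).const_mul α)).const_mul l3)
  exact H.congr_fderiv (by ext v; simp [pr]; try ring)

theorem hasFDerivAt_G5 (α l0 l1 l2 l3 : ℝ) :
    HasFDerivAt (G5 α l0 l1 l2 l3)
      ((-(l0 * α ^ 2) - 2 * l2) • pr 5 - l1 • pr 2) (0 : Fin 6 → ℝ) := by
  have h : ∀ i : Fin 6, HasFDerivAt (fun x : Fin 6 → ℝ => x i) (pr i) (0 : Fin 6 → ℝ) :=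
    fun i => hasFDerivAt_apply i 0
  have H := ((((h 5).const_mul (l0 * α ^ 2)).neg).sub ((h 2).const_mul l1)).sub
    ((h 5).const_mul (2 * l2))
  exact H.congr_fderiv (by ext v; simp [pr]; try ring)

set_option maxHeartbeats 2000000 in
set_option maxRecDepth 8000 in
/-- The determinant of the Hessian matrix of K at the origin of ℝ⁶ equals
−(λ1² + 2λ0λ2)(α²λ0² + λ1² + 2λ0λ2)(α²λ0² + λ1² + 4λ0λ2); in particular, the origin
is a degenerate critical point of K exactly when this product vanishes. -/
theorem hessian_det_at_origin (α lam0 lam1 lam2 lam3 : ℝ) :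
    let hess : Matrix (Fin 6) (Fin 6) ℝ :=
      Matrix.of fun i j =>
        fderiv ℝ (fun x => fderiv ℝ (Ksok α lam0 lam1 lam2 lam3) x (Pi.single j 1))
          0 (Pi.single i 1)
    hess.det = -((lam1 ^ 2 + 2 * lam0 * lam2)
        * (α ^ 2 * lam0 ^ 2 + lam1 ^ 2 + 2 * lam0 * lam2)
        * (α ^ 2 * lam0 ^ 2 + lam1 ^ 2 + 4 * lam0 * lam2)) ∧
      (hess.det = 0 ↔ (lam1 ^ 2 + 2 * lam0 * lam2)
        * (α ^ 2 * lam0 ^ 2 + lam1 ^ 2 + 2 * lam0 * lam2)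
        * (α ^ 2 * lam0 ^ 2 + lam1 ^ 2 + 4 * lam0 * lam2) = 0) := by
  intro hess
  have key : ∀ x, fderiv ℝ (Ksok α lam0 lam1 lam2 lam3) x = Kgrad α lam0 lam1 lam2 lam3 x :=
    fun x => (hasFDerivAt_Ksok α lam0 lam1 lam2 lam3 x).fderiv
  have hf0 : (fun x => fderiv ℝ (Ksok α lam0 lam1 lam2 lam3) x (Pi.single (0 : Fin 6) 1))
      = G0 α lam0 lam1 lam2 lam3 := by
    funext x; rw [key x]; simp [Kgrad, pr, Pi.single_apply]
  have hf1 : (fun x => fderiv ℝ (Ksok α lam0 lam1 lam2 lam3) x (Pi.single (1 : Fin 6) 1))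
      = G1 α lam0 lam1 lam2 lam3 := by
    funext x; rw [key x]; simp [Kgrad, pr, Pi.single_apply]
  have hf2 : (fun x => fderiv ℝ (Ksok α lam0 lam1 lam2 lam3) x (Pi.single (2 : Fin 6) 1))
      = G2 α lam0 lam1 lam2 lam3 := by
    funext x; rw [key x]; simp [Kgrad, pr, Pi.single_apply]
  have hf3 : (fun x => fderiv ℝ (Ksok α lam0 lam1 lam2 lam3) x (Pi.single (3 : Fin 6) 1))
      = G3 α lam0 lam1 lam2 lam3 := by
    funext x; rw [key x]; simp [Kgrad, pr, Pi.single_apply]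
  have hf4 : (fun x => fderiv ℝ (Ksok α lam0 lam1 lam2 lam3) x (Pi.single (4 : Fin 6) 1))
      = G4 α lam0 lam1 lam2 lam3 := by
    funext x; rw [key x]; simp [Kgrad, pr, Pi.single_apply]
  have hf5 : (fun x => fderiv ℝ (Ksok α lam0 lam1 lam2 lam3) x (Pi.single (5 : Fin 6) 1))
      = G5 α lam0 lam1 lam2 lam3 := by
    funext x; rw [key x]; simp [Kgrad, pr, Pi.single_apply]
  have col0 : ∀ i : Fin 6,
      fderiv ℝ (fun x => fderiv ℝ (Ksok α lam0 lam1 lam2 lam3) x (Pi.single (0 : Fin 6) 1))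
        0 (Pi.single i 1) = ![lam0, 0, 0, -lam1, 0, 0] i := by
    intro i
    rw [hf0, (hasFDerivAt_G0 α lam0 lam1 lam2 lam3).fderiv]
    fin_cases i <;> simp [pr, Pi.single_apply, Matrix.cons_val_succ] <;> rfl
  have col1 : ∀ i : Fin 6,
      fderiv ℝ (fun x => fderiv ℝ (Ksok α lam0 lam1 lam2 lam3) x (Pi.single (1 : Fin 6) 1))
        0 (Pi.single i 1) = ![0, lam0, 0, 0, -lam1, 0] i := by
    intro i
    rw [hf1, (hasFDerivAt_G1 α lam0 lam1 lam2 lam3).fderiv]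
    fin_cases i <;> simp [pr, Pi.single_apply, Matrix.cons_val_succ] <;> rfl
  have col2 : ∀ i : Fin 6,
      fderiv ℝ (fun x => fderiv ℝ (Ksok α lam0 lam1 lam2 lam3) x (Pi.single (2 : Fin 6) 1))
        0 (Pi.single i 1) = ![0, 0, 2 * lam0, lam0 * α, 0, -lam1] i := by
    intro i
    rw [hf2, (hasFDerivAt_G2 α lam0 lam1 lam2 lam3).fderiv]
    fin_cases i <;> simp [pr, Pi.single_apply, Matrix.cons_val_succ] <;> rfl
  have col3 : ∀ i : Fin 6,
      fderiv ℝ (fun x => fderiv ℝ (Ksok α lam0 lam1 lam2 lam3) x (Pi.single (3 : Fin 6) 1))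
        0 (Pi.single i 1) = ![-lam1, 0, lam0 * α, -(2 * lam2), 0, 0] i := by
    intro i
    rw [hf3, (hasFDerivAt_G3 α lam0 lam1 lam2 lam3).fderiv]
    fin_cases i <;> simp [pr, Pi.single_apply, Matrix.cons_val_succ] <;> rfl
  have col4 : ∀ i : Fin 6,
      fderiv ℝ (fun x => fderiv ℝ (Ksok α lam0 lam1 lam2 lam3) x (Pi.single (4 : Fin 6) 1))
        0 (Pi.single i 1) = ![0, -lam1, 0, 0, -(2 * lam2), 0] i := by
    intro i
    rw [hf4, (hasFDerivAt_G4 α lam0 lam1 lam2 lam3).fderiv]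
    fin_cases i <;> simp [pr, Pi.single_apply, Matrix.cons_val_succ] <;> rfl
  have col5 : ∀ i : Fin 6,
      fderiv ℝ (fun x => fderiv ℝ (Ksok α lam0 lam1 lam2 lam3) x (Pi.single (5 : Fin 6) 1))
        0 (Pi.single i 1) = ![0, 0, -lam1, 0, 0, -(lam0 * α ^ 2) - 2 * lam2] i := by
    intro i
    rw [hf5, (hasFDerivAt_G5 α lam0 lam1 lam2 lam3).fderiv]
    fin_cases i <;> simp [pr, Pi.single_apply, Matrix.cons_val_succ] <;> rfl
  have hM : hess = Matrix.of (fun i j : Fin 6 =>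
      if i.val = 0 then (if j.val = 0 then lam0 else if j.val = 3 then -lam1 else 0)
      else if i.val = 1 then (if j.val = 1 then lam0 else if j.val = 4 then -lam1 else 0)
      else if i.val = 2 then (if j.val = 2 then 2 * lam0 else if j.val = 3 then lam0 * α
        else if j.val = 5 then -lam1 else 0)
      else if i.val = 3 then (if j.val = 0 then -lam1 else if j.val = 2 then lam0 * α
        else if j.val = 3 then -(2 * lam2) else 0)
      else if i.val = 4 then (if j.val = 1 then -lam1 else if j.val = 4 then -(2 * lam2) else 0)
      else (if j.val = 2 then -lam1
        else if j.val = 5 then -(lam0 * α ^ 2) - 2 * lam2 else 0)) := by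
    ext i j
    fin_cases i <;> fin_cases j <;>
      first
      | exact col0 _ | exact col1 _ | exact col2 _
      | exact col3 _ | exact col4 _ | exact col5 _
  have hdet : hess.det = -((lam1 ^ 2 + 2 * lam0 * lam2)
      * (α ^ 2 * lam0 ^ 2 + lam1 ^ 2 + 2 * lam0 * lam2)
      * (α ^ 2 * lam0 ^ 2 + lam1 ^ 2 + 4 * lam0 * lam2)) := by
    rw [hM]
    simp [Matrix.det_succ_row_zero, Fin.sum_univ_succ, Matrix.submatrix_apply, Fin.succAbove]
    ring
  exact ⟨hdet, by rw [hdet, neg_eq_zero]⟩
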